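/- For every real ε with 0 < ε ≤ 1, setting k := 2·⌈π·ε^{−1/2}⌉ one has 1/cos(π/k)² ≤ 1 + ε. -/
import Mathlib


/-- For `0 < ε ≤ 1` and `k := 2·⌈π·ε^(−1/2)⌉` one has
`1 / cos(π/k)² ≤ 1 + ε`. -/
theorem approximation_parameter_choice (ε : ℝ) (hε : 0 < ε) (hε1 : ε ≤ 1) :
    1 / Real.cos (Real.pi / (2 * (⌈Real.pi / Real.sqrt ε⌉₊ : ℝ))) ^ 2 ≤ 1 + ε := by
  have hs : 0 < Real.sqrt ε := Real.sqrt_pos.mpr hε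
  have hs1 : Real.sqrt ε ≤ 1 := by
    rw [show (1:ℝ) = Real.sqrt 1 by simp]
    exact Real.sqrt_le_sqrt hε1
  have hsq : Real.sqrt ε ^ 2 = ε := Real.sq_sqrt hε.le
  have hpi : 0 < Real.pi := Real.pi_pos
  set n : ℕ := ⌈Real.pi / Real.sqrt ε⌉₊ with hn
  have hnpos : 0 < (n : ℝ) := by
    have : (0:ℝ) < Real.pi / Real.sqrt ε := div_pos hpi hs
    exact_mod_cast Nat.ceil_pos.mpr this
  have hle : Real.pi / Real.sqrt ε ≤ (n : ℝ) := Nat.le_ceil _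
  set x : ℝ := Real.pi / (2 * (n : ℝ)) with hxdef
  have hxpos : 0 < x := div_pos hpi (by positivity)
  have hx : x ≤ Real.sqrt ε / 2 := by
    rw [hxdef, div_le_div_iff₀ (by positivity) (by norm_num)]
    have : Real.pi ≤ (n : ℝ) * Real.sqrt ε := by
      rw [div_le_iff₀ hs] at hle; linarith
    nlinarith
  have hcos : 1 - ε / 8 ≤ Real.cos x := by
    have h1 : 1 - x ^ 2 / 2 ≤ Real.cos x := Real.one_sub_sq_div_two_le_cos
    have h2 : x ^ 2 ≤ (Real.sqrt ε / 2) ^ 2 := by nlinarith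
    nlinarith
  have hcpos : 0 < Real.cos x := by nlinarith
  have hc2 : (1 - ε / 8) ^ 2 ≤ Real.cos x ^ 2 := by nlinarith
  rw [div_le_iff₀ (by positivity)]
  nlinarith [hc2, sq_nonneg ε, mul_pos hε hε]
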